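/- Let n, k, b be integers with 1 ≤ k-1 ≤ b ≤ n. Then the bandwidth of G_{n,k,b} satisfies B(G_{n,k,b}) ≤ k·C(b,k), where C(b,k) denotes the binomial coefficient. -/

import Mathlib

/-- The maximum element of a finite set of naturals (`0` for the empty set). -/
def fmax (X : Finset ℕ) : ℕ := WithBot.unbotD 0 X.max

/-- The minimum element of a finite set of naturals (`0` for the empty set). -/
def fmin (X : Finset ℕ) : ℕ := WithTop.untopD 0 X.min

/-- The vertex set `V_{n,k,b}`: all `k`-element subsets `X` of `{0,…,n}`
with `max X - min X ≤ b`. -/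
def Vnkb (n k b : ℕ) : Finset (Finset ℕ) :=
  ((Finset.range (n + 1)).powersetCard k).filter (fun X => fmax X - fmin X ≤ b)

/-- The graph `G_{n,k,b}`: two distinct vertices `X, Y` are adjacent iff
`max (X ∪ Y) - min (X ∪ Y) ≤ b`. -/
def Gnkb (n k b : ℕ) : SimpleGraph (Vnkb n k b) where
  Adj X Y := X ≠ Y ∧ fmax (X.1 ∪ Y.1) - fmin (X.1 ∪ Y.1) ≤ b
  symm := by
    refine ⟨?_⟩
    rintro X Y ⟨h1, h2⟩
    exact ⟨h1.symm, by rwa [Finset.union_comm]⟩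
  loopless := ⟨by rintro X ⟨h1, -⟩; exact h1 rfl⟩

/-- The bandwidth of a finite graph: the minimum over all bijective labellings of the
vertices by `{0, …, |V|-1}` (equivalently `{1, …, |V|}`) of the maximal absolute
label difference along an edge. -/
noncomputable def bandwidth {V : Type*} [Fintype V] (G : SimpleGraph V) : ℕ :=
  sInf {m : ℕ | ∃ f : V ≃ Fin (Fintype.card V),
    ∀ u v : V, G.Adj u v → (((f u : ℕ) : ℤ) - ((f v : ℕ) : ℤ)).natAbs ≤ m}

/-!
Number the vertices increasingly in the lexicographic order of `(min X, max X)`, ties broken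
arbitrarily. The label distance along an edge `u < v` is then the number of vertices `Z` with
`u < Z ≤ v`. Together with `u`, these have `min Z ∈ [min u, min v]`, and those with
`min Z = min v` also have `max Z ≤ max v ≤ min u + b`. The `k`-sets with minimum `m` and
maximum at most `m + L` are `m` plus a `(k-1)`-subset of `(m, m + L]`, so with
`d = min v - min u ≤ b - (k-1)` there are at most `d·C(b,k-1) + C(b-d,k-1) - 1` such `Z`,
which is at most `(b-k+1)·C(b,k-1) = k·C(b,k)`.
-/

open Finset

section Bandwidth

variable {V α : Type*} [Fintype V] [LinearOrder α]

theorem bandwidth_le_of_card_between_le (G : SimpleGraph V) {key : V → α}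
    (hkey : Function.Injective key) {m : ℕ}
    (h : ∀ u v, G.Adj u v → key u < key v → #{w | key u < key w ∧ key w ≤ key v} ≤ m) :
    bandwidth G ≤ m := by
  let _ : LinearOrder V := LinearOrder.lift' key hkey
  let e := Fintype.orderIsoFinOfCardEq V rfl
  have label_sub_le {u v : V} (hadj : G.Adj u v) (huv : u < v) :
      ((e.symm v : ℕ) : ℤ) - (e.symm u : ℕ) ≤ m := by
    have hcard : #(Ioc (e.symm u) (e.symm v)) ≤ #{w | u < w ∧ w ≤ v} := by
      refine card_le_card_of_injOn e (fun i hi => ?_) e.injective.injOn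
      simp only [coe_Ioc, Set.mem_Ioc] at hi
      simpa [e.symm_apply_lt, e.le_symm_apply] using hi
    have := (Fin.card_Ioc _ _).symm.trans_le (hcard.trans (h u v hadj huv))
    omega
  refine Nat.sInf_le ⟨e.symm.toEquiv, fun u v hadj => ?_⟩
  simp only [OrderIso.coe_toEquiv]
  rcases lt_or_gt_of_ne hadj.ne with huv | hvu
  · have := label_sub_le hadj huv
    have : e.symm u < e.symm v := e.symm.strictMono huv
    omega
  · have := label_sub_le hadj.symm hvu
    have : e.symm v < e.symm u := e.symm.strictMono hvu
    omega

end Bandwidth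

section MinMax

variable {X : Finset ℕ} {x : ℕ}

lemma fmin_eq_min' (h : X.Nonempty) : fmin X = X.min' h := by
  rw [fmin, ← coe_min' h]; rfl

lemma fmax_eq_max' (h : X.Nonempty) : fmax X = X.max' h := by
  rw [fmax, ← coe_max' h]; rfl

lemma fmin_mem (h : X.Nonempty) : fmin X ∈ X := fmin_eq_min' h ▸ X.min'_mem h

lemma fmax_mem (h : X.Nonempty) : fmax X ∈ X := fmax_eq_max' h ▸ X.max'_mem h

lemma fmin_le (hx : x ∈ X) : fmin X ≤ x := fmin_eq_min' ⟨x, hx⟩ ▸ X.min'_le x hx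

lemma le_fmax (hx : x ∈ X) : x ≤ fmax X := fmax_eq_max' ⟨x, hx⟩ ▸ X.le_max' x hx

lemma fmin_add_card_le_fmax_add_one (h : X.Nonempty) : fmin X + #X ≤ fmax X + 1 := by
  have hsub : X ⊆ Icc (fmin X) (fmax X) := fun x hx => mem_Icc.mpr ⟨fmin_le hx, le_fmax hx⟩
  have hcard := card_le_card hsub
  have := fmin_le (fmax_mem h)
  rw [Nat.card_Icc] at hcard
  omega

end MinMax

lemma card_filter_fmin_eq_fmax_le {s : Finset (Finset ℕ)} {j : ℕ} (hs : ∀ Z ∈ s, #Z = j + 1)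
    (m L : ℕ) : #{Z ∈ s | fmin Z = m ∧ fmax Z ≤ m + L} ≤ L.choose j := by
  have mem_of_mem_filter {Z} (hZ : Z ∈ s ∧ fmin Z = m ∧ fmax Z ≤ m + L) : m ∈ Z :=
    hZ.2.1 ▸ fmin_mem (card_pos.mp (by rw [hs Z hZ.1]; omega))
  calc #{Z ∈ s | fmin Z = m ∧ fmax Z ≤ m + L}
      ≤ #((Ioc m (m + L)).powersetCard j) := by
        refine card_le_card_of_injOn (fun Z => Z.erase m) (fun Z hZ => ?_)
          (fun Z hZ Y hY he => ?_)
        · simp only [coe_filter, Set.mem_ofPred_eq] at hZ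
          rw [mem_coe, mem_powersetCard,
            card_erase_of_mem (mem_of_mem_filter hZ), hs Z hZ.1]
          refine ⟨fun x hx => ?_, rfl⟩
          obtain ⟨hxm, hxZ⟩ := mem_erase.mp hx
          exact mem_Ioc.mpr ⟨(hZ.2.1 ▸ fmin_le hxZ).lt_of_ne' hxm, (le_fmax hxZ).trans hZ.2.2⟩
        · simp only [coe_filter, Set.mem_ofPred_eq] at hZ hY
          rw [← insert_erase (mem_of_mem_filter hZ), ← insert_erase (mem_of_mem_filter hY)]
          exact congrArg (insert m) he
    _ = L.choose j := by rw [card_powersetCard, Nat.card_Ioc, Nat.add_sub_cancel_left]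

lemma mul_choose_add_choose_sub_le {b j d : ℕ} (h : d + j ≤ b) :
    d * b.choose j + (b - d).choose j ≤ (b - j) * b.choose j + 1 := by
  rcases h.lt_or_eq with hlt | heq
  · have : (b - d).choose j ≤ b.choose j := Nat.choose_le_choose j (b.sub_le d)
    have : (d + 1) * b.choose j ≤ (b - j) * b.choose j := Nat.mul_le_mul_right _ (by omega)
    linarith
  · rw [← heq, Nat.add_sub_cancel, Nat.add_sub_cancel_left, Nat.choose_self]

def vertexKey (X : Finset ℕ) : ℕ ×ₗ ℕ ×ₗ ℕ :=
  toLex (fmin X, toLex (fmax X, Encodable.encode X))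

lemma vertexKey_injective : Function.Injective vertexKey := fun _ _ h =>
  Encodable.encode_injective (congrArg (fun p => (ofLex (ofLex p).2).2) h)

lemma vertexKey_le_iff {X Y : Finset ℕ} :
    vertexKey X ≤ vertexKey Y ↔ fmin X < fmin Y ∨ fmin X = fmin Y ∧
      (fmax X < fmax Y ∨ fmax X = fmax Y ∧ Encodable.encode X ≤ Encodable.encode Y) := by
  rw [vertexKey, vertexKey, Prod.Lex.toLex_le_toLex, Prod.Lex.toLex_le_toLex]

lemma fmin_le_fmin_of_vertexKey_le {X Y : Finset ℕ} (h : vertexKey X ≤ vertexKey Y) :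
    fmin X ≤ fmin Y := by
  have := vertexKey_le_iff.mp h
  omega

lemma fmax_le_fmax_of_vertexKey_le {X Y : Finset ℕ} (h : vertexKey X ≤ vertexKey Y)
    (hmin : fmin X = fmin Y) : fmax X ≤ fmax Y := by
  have := vertexKey_le_iff.mp h
  omega

section Vertices

variable {n j b : ℕ} {X : Finset ℕ}

lemma card_of_mem_Vnkb (hX : X ∈ Vnkb n j b) : #X = j :=
  (mem_powersetCard.mp (mem_filter.mp hX).1).2

lemma fmax_le_fmin_add_of_mem_Vnkb (hX : X ∈ Vnkb n j b) : fmax X ≤ fmin X + b := by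
  have := (mem_filter.mp hX).2
  omega

lemma nonempty_of_mem_Vnkb (hX : X ∈ Vnkb n (j + 1) b) : X.Nonempty :=
  card_pos.mp (by rw [card_of_mem_Vnkb hX]; omega)

lemma fmin_add_le_fmax_of_mem_Vnkb (hX : X ∈ Vnkb n (j + 1) b) : fmin X + j ≤ fmax X := by
  have := fmin_add_card_le_fmax_add_one (nonempty_of_mem_Vnkb hX)
  rw [card_of_mem_Vnkb hX] at this
  omega

end Vertices

lemma fmax_le_fmin_add_of_adj {n j b : ℕ} {u v : Vnkb n (j + 1) b}
    (h : (Gnkb n (j + 1) b).Adj u v) : fmax v.1 ≤ fmin u.1 + b := by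
  have hmax : fmax v.1 ≤ fmax (u.1 ∪ v.1) :=
    le_fmax (mem_union_right _ (fmax_mem (nonempty_of_mem_Vnkb v.2)))
  have hmin : fmin (u.1 ∪ v.1) ≤ fmin u.1 :=
    fmin_le (mem_union_left _ (fmin_mem (nonempty_of_mem_Vnkb u.2)))
  have := h.2
  omega

lemma card_vertexKey_between_le {n j b : ℕ} {u v : Finset ℕ} (hu : u ∈ Vnkb n (j + 1) b)
    (hv : v ∈ Vnkb n (j + 1) b) (hlt : vertexKey u < vertexKey v) (hmax : fmax v ≤ fmin u + b) :
    #{Z ∈ Vnkb n (j + 1) b | vertexKey u < vertexKey Z ∧ vertexKey Z ≤ vertexKey v} ≤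
      (b - j) * b.choose j := by
  set V := Vnkb n (j + 1) b
  set a := fmin u
  set c := fmin v
  set T := {Z ∈ V | vertexKey u < vertexKey Z ∧ vertexKey Z ≤ vertexKey v}
  let cls (m L : ℕ) := {Z ∈ V | fmin Z = m ∧ fmax Z ≤ m + L}
  have hac : a ≤ c := fmin_le_fmin_of_vertexKey_le hlt.le
  have hdj : (c - a) + j ≤ b := by
    have := fmin_add_le_fmax_of_mem_Vnkb hv
    omega
  have hcover : insert u T ⊆ (Ico a c).biUnion (fun m => cls m b) ∪ cls c (b - (c - a)) := by
    intro Z hZ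
    have hZV : Z ∈ V := (mem_insert.mp hZ).elim (· ▸ hu) (mem_filter.mp · |>.1)
    have hZb := fmax_le_fmin_add_of_mem_Vnkb hZV
    have hZmin : a ≤ fmin Z ∧ fmin Z ≤ c ∧ (fmin Z = c → fmax Z ≤ a + b) := by
      rcases mem_insert.mp hZ with rfl | hZT
      · exact ⟨le_rfl, hac, fun _ => fmax_le_fmin_add_of_mem_Vnkb hu⟩
      · obtain ⟨-, hlo, hhi⟩ := mem_filter.mp hZT
        exact ⟨fmin_le_fmin_of_vertexKey_le hlo.le, fmin_le_fmin_of_vertexKey_le hhi,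
          fun he => (fmax_le_fmax_of_vertexKey_le hhi he).trans hmax⟩
    rcases hZmin.2.1.lt_or_eq with hlt | heq
    · exact mem_union_left _ (mem_biUnion.mpr
        ⟨fmin Z, mem_Ico.mpr ⟨hZmin.1, hlt⟩, mem_filter.mpr ⟨hZV, rfl, hZb⟩⟩)
    · exact mem_union_right _ (mem_filter.mpr ⟨hZV, heq, by have := hZmin.2.2 heq; omega⟩)
  have hcls (m L : ℕ) : #(cls m L) ≤ L.choose j :=
    card_filter_fmin_eq_fmax_le (fun _ hZ => card_of_mem_Vnkb hZ) m L
  have hu_notin : u ∉ T := fun h => (mem_filter.mp h).2.1.false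
  have := calc #T + 1
      = #(insert u T) := (card_insert_of_notMem hu_notin).symm
    _ ≤ #((Ico a c).biUnion (fun m => cls m b)) + #(cls c (b - (c - a))) :=
        (card_le_card hcover).trans (card_union_le _ _)
    _ ≤ (c - a) * b.choose j + (b - (c - a)).choose j := by
        gcongr
        · exact (card_biUnion_le_card_mul _ _ _ fun m _ => hcls m b).trans_eq
            (by rw [Nat.card_Ico])
        · exact hcls c _
    _ ≤ (b - j) * b.choose j + 1 := mul_choose_add_choose_sub_le hdj
  omega

theorem bandwidth_le_general (n k b : ℕ) (h1 : 1 ≤ k - 1) :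
    bandwidth (Gnkb n k b) ≤ k * Nat.choose b k := by
  obtain ⟨j, rfl⟩ : ∃ j, k = j + 1 := ⟨k - 1, by omega⟩
  have hchoose : (b - j) * b.choose j = (j + 1) * b.choose (j + 1) := by
    rw [mul_comm, ← Nat.choose_succ_right_eq, mul_comm]
  refine hchoose ▸ bandwidth_le_of_card_between_le _ (key := fun w => vertexKey w.1)
    (fun _ _ h => Subtype.ext (vertexKey_injective h)) fun u v hadj hlt => ?_
  rw [univ_eq_attach,
    filter_attach (fun Z => vertexKey u < vertexKey Z ∧ vertexKey Z ≤ vertexKey v), card_map,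
    card_attach]
  exact card_vertexKey_between_le u.2 v.2 hlt (fmax_le_fmin_add_of_adj hadj)

/-- The bandwidth of `G_{n,k,b}` is at most `k·C(b,k)`. -/
theorem bandwidth_le (n k b : ℕ) (h1 : 1 ≤ k - 1) (h2 : k - 1 ≤ b) (h3 : b ≤ n) :
    bandwidth (Gnkb n k b) ≤ k * Nat.choose b k :=
  bandwidth_le_general n k b h1
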